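/- Let A : [0,1] → Matₙ(ℝ) be a differentiable family of symmetric positive definite matrices, and suppose there is M > 0 such that |ξᵀ A'(r) ξ| ≤ M ξᵀ A(r) ξ for every r ∈ [0,1] and ξ ∈ ℝⁿ. Then |d/dr (log det A(r))| ≤ n M for every r ∈ [0,1]. -/

import Mathlib

/-!
By Jacobi's formula, (log det A)' = tr(A⁻¹ A'). Take an orthonormal eigenbasis vⱼ of A(r),
with eigenvalues λⱼ > 0, and compute the trace in it as tr(A' A⁻¹): the j-th term is
λⱼ⁻¹ vⱼᵀ A' vⱼ, and the hypothesis at ξ = vⱼ bounds it by M in absolute value.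
-/

open Matrix

namespace Matrix

variable {ι : Type*} [Fintype ι] [DecidableEq ι]

theorem hasDerivAt_det_of_hasDerivAt_entries {𝕜 R : Type*} [NontriviallyNormedField 𝕜]
    [NormedCommRing R] [NormedAlgebra 𝕜 R] {A : 𝕜 → Matrix ι ι R} {A' : Matrix ι ι R} {x : 𝕜}
    (h : ∀ i j, HasDerivAt (fun t => A t i j) (A' i j) x) :
    HasDerivAt (fun t => (A t).det) (∑ j, ((A x).updateCol j fun i => A' i j).det) x := by
  have hLeibniz : HasDerivAt (fun t => (A t).det)
      (∑ σ : Equiv.Perm ι, ((Equiv.Perm.sign σ : ℤ) : R) *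
        ∑ j, (∏ i ∈ Finset.univ.erase j, A x (σ i) i) • A' (σ j) j) x := by
    simp only [det_apply']
    exact HasDerivAt.fun_sum fun σ _ =>
      (HasDerivAt.fun_finsetProd fun i _ => h (σ i) i).const_mul _
  convert hLeibniz using 1
  simp only [Finset.mul_sum]
  rw [Finset.sum_comm]
  refine Finset.sum_congr rfl fun j _ => ?_
  rw [det_apply']
  refine Finset.sum_congr rfl fun σ _ => ?_
  rw [← Finset.mul_prod_erase _ _ (Finset.mem_univ j), updateCol_self, smul_eq_mul,
    mul_comm (A' (σ j) j)]
  congr 2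
  exact Finset.prod_congr rfl fun i hi => updateCol_ne (Finset.ne_of_mem_erase hi)

theorem sum_det_updateCol_eq_trace_adjugate_mul {R : Type*} [CommRing R] (B C : Matrix ι ι R) :
    ∑ j, (B.updateCol j fun i => C i j).det = (B.adjugate * C).trace := by
  refine Finset.sum_congr rfl fun j _ => ?_
  rw [← cramer_apply, cramer_eq_adjugate_mulVec]
  rfl

theorem hasDerivAt_det {𝕜 R : Type*} [NontriviallyNormedField 𝕜]
    [NormedCommRing R] [NormedAlgebra 𝕜 R] {A : 𝕜 → Matrix ι ι R} {A' : Matrix ι ι R} {x : 𝕜}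
    (h : ∀ i j, HasDerivAt (fun t => A t i j) (A' i j) x) :
    HasDerivAt (fun t => (A t).det) ((A x).adjugate * A').trace x :=
  sum_det_updateCol_eq_trace_adjugate_mul (A x) A' ▸ hasDerivAt_det_of_hasDerivAt_entries h

theorem hasDerivAt_log_det {A : ℝ → Matrix ι ι ℝ} {A' : Matrix ι ι ℝ} {x : ℝ}
    (h : ∀ i j, HasDerivAt (fun t => A t i j) (A' i j) x) (hx : (A x).det ≠ 0) :
    HasDerivAt (fun t => Real.log (A t).det) ((A x)⁻¹ * A').trace x := by
  convert (hasDerivAt_det h).log hx using 1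
  rw [inv_def, Ring.inverse_eq_inv, smul_mul, trace_smul, smul_eq_mul, div_eq_inv_mul]

theorem trace_eq_sum_star_dotProduct_mulVec {𝕜 : Type*} [RCLike 𝕜] (X : Matrix ι ι 𝕜)
    (b : OrthonormalBasis ι 𝕜 (EuclideanSpace 𝕜 ι)) :
    X.trace = ∑ i, star (b i).ofLp ⬝ᵥ X *ᵥ (b i).ofLp := by
  rw [← trace_toLin_eq X (PiLp.basisFun 2 𝕜 ι), ← toLpLin_eq_toLin,
    LinearMap.trace_eq_sum_inner _ b]
  simp only [toLpLin_apply, EuclideanSpace.inner_eq_star_dotProduct, dotProduct_comm]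

theorem PosDef.abs_trace_inv_mul_le {B C : Matrix ι ι ℝ} (hB : B.PosDef) {M : ℝ}
    (h : ∀ ξ, |ξ ⬝ᵥ C *ᵥ ξ| ≤ M * (ξ ⬝ᵥ B *ᵥ ξ)) :
    |(B⁻¹ * C).trace| ≤ Fintype.card ι * M := by
  set v := fun j => (hB.isHermitian.eigenvectorBasis j).ofLp
  set μ := hB.isHermitian.eigenvalues
  have hμ : ∀ j, 0 < μ j := hB.eigenvalues_pos
  have hquad : ∀ j, v j ⬝ᵥ B *ᵥ v j = μ j := fun j => by
    simpa using (hB.isHermitian.eigenvalues_eq j).symm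
  have hinv : ∀ j, B⁻¹ *ᵥ v j = (μ j)⁻¹ • v j := fun j => by
    rw [eq_inv_smul_iff₀ (hμ j).ne', ← mulVec_smul, ← hB.isHermitian.mulVec_eigenvectorBasis,
      mulVec_mulVec, nonsing_inv_mul _ (isUnit_iff_ne_zero.mpr hB.det_pos.ne'), one_mulVec]
  have hterm : ∀ j, |v j ⬝ᵥ (C * B⁻¹) *ᵥ v j| ≤ M := fun j => by
    rw [← mulVec_mulVec, hinv, mulVec_smul, dotProduct_smul, smul_eq_mul, abs_mul,
      abs_inv, abs_of_pos (hμ j), inv_mul_le_iff₀ (hμ j), mul_comm, ← hquad]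
    exact h (v j)
  calc |(B⁻¹ * C).trace|
      = |∑ j, v j ⬝ᵥ (C * B⁻¹) *ᵥ v j| := by
        rw [trace_mul_comm, trace_eq_sum_star_dotProduct_mulVec _ hB.isHermitian.eigenvectorBasis]
        simp [v]
    _ ≤ ∑ j, |v j ⬝ᵥ (C * B⁻¹) *ᵥ v j| := Finset.abs_sum_le_sum_abs _ _
    _ ≤ ∑ _j : ι, M := Finset.sum_le_sum fun j _ => hterm j
    _ = Fintype.card ι * M := by simp

end Matrix

theorem stmt_14_general {n : ℕ} (A A' : ℝ → Matrix (Fin n) (Fin n) ℝ)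
    (hderiv : ∀ r ∈ Set.Icc (0:ℝ) 1, ∀ i j, HasDerivAt (fun t => A t i j) (A' r i j) r)
    (hpd : ∀ r ∈ Set.Icc (0:ℝ) 1, (A r).PosDef)
    (M : ℝ)
    (hbd : ∀ r ∈ Set.Icc (0:ℝ) 1, ∀ ξ : Fin n → ℝ,
      |ξ ⬝ᵥ (A' r).mulVec ξ| ≤ M * (ξ ⬝ᵥ (A r).mulVec ξ)) :
    ∀ r ∈ Set.Icc (0:ℝ) 1, |deriv (fun t => Real.log (A t).det) r| ≤ n * M := by
  intro r hr
  rw [(hasDerivAt_log_det (hderiv r hr) (hpd r hr).det_pos.ne').deriv]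
  simpa using (hpd r hr).abs_trace_inv_mul_le (hbd r hr)

theorem stmt_14 {n : ℕ} (A A' : ℝ → Matrix (Fin n) (Fin n) ℝ)
    (hderiv : ∀ r ∈ Set.Icc (0:ℝ) 1, ∀ i j, HasDerivAt (fun t => A t i j) (A' r i j) r)
    (hpd : ∀ r ∈ Set.Icc (0:ℝ) 1, (A r).PosDef)
    (M : ℝ) (hM : 0 < M)
    (hbd : ∀ r ∈ Set.Icc (0:ℝ) 1, ∀ ξ : Fin n → ℝ,
      |ξ ⬝ᵥ (A' r).mulVec ξ| ≤ M * (ξ ⬝ᵥ (A r).mulVec ξ)) :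
    ∀ r ∈ Set.Icc (0:ℝ) 1, |deriv (fun t => Real.log (A t).det) r| ≤ n * M :=
  stmt_14_general A A' hderiv hpd M hbd
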